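/- Let (T(t))_{t≥0} be a C₀-semigroup on a complex Banach space X with ‖T(t)‖ ≤ M for all t ≥ 0, where M ≥ 1, and let A be its infinitesimal generator. Suppose there exist ζ ∈ ℂ with |ζ| = 1 and K ≥ 1/2 such that ‖(ζI − T(t))x‖ ≥ ‖x‖/K for all x ∈ X and all t > 0, and write ζ = e^{iθ₁} = e^{−iθ₂} with θ₁, θ₂ > 0. Then for every real α ≠ 0 one has iα ∈ ρ(A) and ‖R(iα,A)‖ ≤ C/|α|, where C := M·K·max(θ₁,θ₂). -/

import Mathlib

/-!
Put `λ = iα` and pick `t > 0` with `e^{-λt} = ζ⁻¹` (`t = θ₁/α` if `α > 0`, `t = θ₂/|α|` if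
`α < 0`), so that `t ≤ max θ₁ θ₂ / |α|`. The operator `V = I - ζ⁻¹ T(t)` is bounded below by
`1/K`; since `ζ⁻¹ T(t)` is power bounded, `I - r ζ⁻¹ T(t)` is invertible for `r < 1`, and the
solutions of `(I - r ζ⁻¹ T(t)) x = y` stay bounded as `r ↑ 1` and become approximate solutions
of `V x = y`, so `V` is onto. With `G z = ∫₀ᵗ e^{-λs} T(s) z ds` one has `(λ - A) G = V` on `X`
and `G (λ - A) = V` on `D(A)`, and `G` commutes with `V`; hence `R(λ, A) = G V⁻¹`, whose norm
is at most `M t K`.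
-/

open Filter Topology

universe u

/-- A strongly continuous one-parameter semigroup of bounded operators on a complex
Banach space. -/
def IsC0Semigroup {X : Type u} [NormedAddCommGroup X] [NormedSpace ℂ X]
    (T : ℝ → X →L[ℂ] X) : Prop :=
  T 0 = 1 ∧ (∀ s t : ℝ, 0 ≤ s → 0 ≤ t → T (s + t) = (T s).comp (T t)) ∧
    ∀ x : X, Tendsto (fun t => T t x) (nhdsWithin 0 (Set.Ioi 0)) (nhds x)

/-- `A` (with domain `dom`) is the infinitesimal generator of the semigroup `T`. -/
def IsGenerator {X : Type u} [NormedAddCommGroup X] [NormedSpace ℂ X]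
    (T : ℝ → X →L[ℂ] X) (dom : Set X) (A : X → X) : Prop :=
  (∀ x : X, x ∈ dom ↔ ∃ y : X,
      Tendsto (fun h : ℝ => (h : ℂ)⁻¹ • (T h x - x)) (nhdsWithin 0 (Set.Ioi 0)) (nhds y)) ∧
    ∀ x ∈ dom,
      Tendsto (fun h : ℝ => (h : ℂ)⁻¹ • (T h x - x)) (nhdsWithin 0 (Set.Ioi 0)) (nhds (A x))

/-- `R` is the resolvent of `A` (with domain `dom`) at `lam`. -/
def IsResolventAt {X : Type u} [NormedAddCommGroup X] [NormedSpace ℂ X]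
    (dom : Set X) (A : X → X) (lam : ℂ) (R : X →L[ℂ] X) : Prop :=
  (∀ y : X, R y ∈ dom) ∧ (∀ y : X, lam • R y - A (R y) = y) ∧
    ∀ x ∈ dom, R (lam • x - A x) = x

open Set MeasureTheory

namespace ContinuousLinearMap

variable {𝕜 E : Type*} [RCLike 𝕜] [NormedAddCommGroup E] [NormedSpace 𝕜 E]
  {B : E →L[𝕜] E} {M : ℝ}

theorem norm_one_sub_apply_sub_le (hB : ‖B‖ ≤ M) {K : NNReal}
    (hK : AntilipschitzWith K ⇑(1 - B)) {η : ℝ} (hη₀ : 0 < η) (hη : η * (K * M) ≤ 1 / 2)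
    {x y : E} (hxy : (1 - ((1 - η : ℝ) : 𝕜) • B) x = y) :
    ‖(1 - B) x - y‖ ≤ η * (2 * K * M * ‖y‖) := by
  have hM : 0 ≤ M := (norm_nonneg _).trans hB
  have hdiff : (1 - B) x - y = -((η : 𝕜) • B x) := by
    rw [← hxy]
    simp only [sub_apply, one_apply_eq_self, smul_apply, RCLike.ofReal_sub, RCLike.ofReal_one]
    module
  have hdiff_le : ‖(1 - B) x - y‖ ≤ η * (M * ‖x‖) := by
    rw [hdiff, norm_neg, norm_smul, RCLike.norm_ofReal, abs_of_pos hη₀]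
    exact mul_le_mul_of_nonneg_left (B.le_of_opNorm_le hB x) hη₀.le
  have hx : ‖x‖ ≤ 2 * K * ‖y‖ := by
    have hbelow := (1 - B).bound_of_antilipschitz hK x
    have hnorm : ‖(1 - B) x‖ ≤ ‖y‖ + η * (M * ‖x‖) :=
      (norm_le_insert' _ y).trans (by linarith [hdiff_le])
    nlinarith [norm_nonneg x, K.coe_nonneg]
  calc ‖(1 - B) x - y‖ ≤ η * (M * ‖x‖) := hdiff_le
    _ ≤ η * (M * (2 * K * ‖y‖)) := by gcongr
    _ = η * (2 * K * M * ‖y‖) := by ring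

variable [CompleteSpace E]

theorem surjective_one_sub_smul_of_norm_pow_le (hB : ∀ n : ℕ, ‖B ^ n‖ ≤ M) {r : ℝ}
    (hr₀ : 0 ≤ r) (hr₁ : r < 1) : Function.Surjective ⇑(1 - (r : 𝕜) • B) := by
  have hsum : Summable fun n : ℕ => ((r : 𝕜) • B) ^ n := by
    refine Summable.of_norm_bounded ((summable_geometric_of_lt_one hr₀ hr₁).mul_right M)
      fun n => ?_
    rw [smul_pow, norm_smul, norm_pow, RCLike.norm_ofReal, abs_of_nonneg hr₀]
    exact mul_le_mul_of_nonneg_left (hB n) (by positivity)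
  intro y
  refine ⟨(∑' n, ((r : 𝕜) • B) ^ n) y, ?_⟩
  rw [← mul_apply_eq_comp, hsum.one_sub_mul_tsum_pow, one_apply_eq_self]

theorem surjective_one_sub_of_norm_pow_le (hB : ∀ n : ℕ, ‖B ^ n‖ ≤ M) {K : NNReal}
    (hK : AntilipschitzWith K ⇑(1 - B)) : Function.Surjective ⇑(1 - B) := by
  intro y
  rw [← mem_range, ← (hK.isClosed_range (1 - B).uniformContinuous).closure_eq]
  have hex : ∀ η : ℝ, ∃ x, 0 < η → η ≤ 1 → (1 - ((1 - η : ℝ) : 𝕜) • B) x = y := fun η =>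
    if h : 0 < η ∧ η ≤ 1 then
      (surjective_one_sub_smul_of_norm_pow_le hB (by linarith) (by linarith) y).imp
        fun _ hx _ _ => hx
    else ⟨0, fun h₀ h₁ => (h ⟨h₀, h₁⟩).elim⟩
  choose x hx using hex
  have hsmall : Tendsto (fun η : ℝ => η * (K * M)) (𝓝 0) (𝓝 0) := by
    simpa using (continuous_mul_const (K * M : ℝ)).tendsto 0
  have hbound : ∀ᶠ η in 𝓝[>] (0 : ℝ), ‖(1 - B) (x η) - y‖ ≤ η * (2 * K * M * ‖y‖) := by
    filter_upwards [self_mem_nhdsWithin, nhdsWithin_le_nhds (Iic_mem_nhds zero_lt_one),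
      nhdsWithin_le_nhds (hsmall.eventually (Iic_mem_nhds one_half_pos))] with η h₀ h₁ h₂
    exact norm_one_sub_apply_sub_le (by simpa using hB 1) hK h₀ h₂ (hx η h₀ h₁)
  have hlim : Tendsto (fun η : ℝ => η * (2 * K * M * ‖y‖)) (𝓝[>] 0) (𝓝 0) := by
    simpa using ((continuous_mul_const _).tendsto (0 : ℝ)).mono_left nhdsWithin_le_nhds
  exact mem_closure_of_tendsto (tendsto_iff_norm_sub_tendsto_zero.2 <|
      squeeze_zero' (Eventually.of_forall fun _ => norm_nonneg _) hbound hlim)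
    (Eventually.of_forall fun η => mem_range_self (x η))

end ContinuousLinearMap

theorem hasDerivAt_exp_mul_ofReal (c : ℂ) (s : ℝ) :
    HasDerivAt (fun u : ℝ => Complex.exp (c * u)) (c * Complex.exp (c * s)) s := by
  simpa [mul_comm] using ((hasDerivAt_id s).ofReal_comp.const_mul c).cexp

theorem hasDerivAt_exp_neg_mul_ofReal (c : ℂ) (s : ℝ) :
    HasDerivAt (fun u : ℝ => Complex.exp (-(c * u))) (-c * Complex.exp (-(c * s))) s := by
  simpa using hasDerivAt_exp_mul_ofReal (-c) s

theorem exists_pos_exp_neg_mul_I_eq_inv {ζ : ℂ} {θ₁ θ₂ : ℝ} (hθ₁ : 0 < θ₁) (hθ₂ : 0 < θ₂)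
    (hζ₁ : Complex.exp ((θ₁ : ℂ) * Complex.I) = ζ)
    (hζ₂ : Complex.exp (-(θ₂ : ℂ) * Complex.I) = ζ) {α : ℝ} (hα : α ≠ 0) :
    ∃ t : ℝ, 0 < t ∧ t ≤ max θ₁ θ₂ / |α| ∧
      Complex.exp (-((α : ℂ) * Complex.I * t)) = ζ⁻¹ := by
  have hα' : (α : ℂ) ≠ 0 := Complex.ofReal_ne_zero.2 hα
  rcases hα.lt_or_gt with hneg | hpos
  · refine ⟨θ₂ / |α|, by positivity, by gcongr; exact le_max_right _ _, ?_⟩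
    rw [← hζ₂, ← Complex.exp_neg, abs_of_neg hneg]
    congr 1
    push_cast
    field_simp
  · refine ⟨θ₁ / |α|, by positivity, by gcongr; exact le_max_left _ _, ?_⟩
    rw [← hζ₁, ← Complex.exp_neg, abs_of_pos hpos]
    congr 1
    push_cast
    field_simp

section

variable {X : Type*} [NormedAddCommGroup X] [NormedSpace ℂ X]

theorem hasDerivWithinAt_Ici_iff_tendsto_inv_smul {f : ℝ → X} {f' : X} {a : ℝ} :
    HasDerivWithinAt f f' (Ici a) a ↔
      Tendsto (fun h : ℝ => (h : ℂ)⁻¹ • (f (a + h) - f a)) (𝓝[>] 0) (𝓝 f') := by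
  have : 𝓝[>] a = map (fun h => a + h) (𝓝[>] 0) := by simp
  rw [hasDerivWithinAt_iff_tendsto_slope, Ici_sdiff_left, this, tendsto_map'_iff]
  simp [slope, Function.comp_def, ← Complex.ofReal_inv, Complex.coe_smul]

theorem antilipschitzWith_one_sub_inv_smul {S : X →L[ℂ] X} {ζ : ℂ} (hζ : ‖ζ‖ = 1) {K : ℝ}
    (hK : 0 < K) (hlow : ∀ x, ‖x‖ / K ≤ ‖ζ • x - S x‖) :
    AntilipschitzWith K.toNNReal ⇑(1 - ζ⁻¹ • S) := by
  refine ContinuousLinearMap.antilipschitz_of_bound _ fun x => ?_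
  have hζS : ζ • (1 - ζ⁻¹ • S) x = ζ • x - S x := by
    simp [smul_sub, smul_smul, mul_inv_cancel₀ (norm_ne_zero_iff.1 (hζ.trans_ne one_ne_zero))]
  rw [Real.coe_toNNReal _ hK.le, ← div_le_iff₀' hK, ← one_mul ‖(1 - ζ⁻¹ • S) x‖, ← hζ,
    ← norm_smul, hζS]
  exact hlow x

theorem exists_isResolventAt_of_intertwining [CompleteSpace X] {dom : Set X} {A : X → X}
    {lam : ℂ} (g V : X →L[ℂ] X) {K : NNReal} (hVK : AntilipschitzWith K V)
    (hV : Function.Surjective V) (hcomm : ∀ z, g (V z) = V (g z)) (hdom : ∀ z, g z ∈ dom)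
    (hleft : ∀ z, lam • g z - A (g z) = V z) (hright : ∀ x ∈ dom, g (lam • x - A x) = V x) :
    ∃ R : X →L[ℂ] X, IsResolventAt dom A lam R ∧ ‖R‖ ≤ ‖g‖ * K := by
  let e := ContinuousLinearEquiv.ofBijective V (LinearMap.ker_eq_bot.2 hVK.injective)
    (LinearMap.range_eq_top.2 hV)
  have hVe : ∀ y, V (e.symm y) = y := ContinuousLinearEquiv.ofBijective_apply_symm_apply V _ _
  have heV : ∀ x, e.symm (V x) = x := ContinuousLinearEquiv.ofBijective_symm_apply_apply V _ _
  have hcomm' : ∀ z, g (e.symm z) = e.symm (g z) := fun z => by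
    rw [← heV (g (e.symm z)), ← hcomm, hVe]
  refine ⟨g.comp (e.symm : X →L[ℂ] X), ⟨fun y => hdom _, fun y => ?_, fun x hx => ?_⟩, ?_⟩
  · simp [hleft, hVe]
  · rw [ContinuousLinearMap.comp_apply, ContinuousLinearEquiv.coe_coe, hcomm', hright x hx, heV]
  · refine (g.opNorm_comp_le _).trans (mul_le_mul_of_nonneg_left ?_ (norm_nonneg g))
    exact ContinuousLinearMap.opNorm_le_bound _ K.coe_nonneg fun y => by
      simpa [hVe] using V.bound_of_antilipschitz hVK (e.symm y)

namespace IsC0Semigroup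

variable {T : ℝ → X →L[ℂ] X} {M : ℝ}

theorem apply_add (hT : IsC0Semigroup T) {s t : ℝ} (hs : 0 ≤ s) (ht : 0 ≤ t) (x : X) :
    T (s + t) x = T s (T t x) := by
  rw [hT.2.1 s t hs ht, ContinuousLinearMap.comp_apply]

theorem apply_comm (hT : IsC0Semigroup T) {s t : ℝ} (hs : 0 ≤ s) (ht : 0 ≤ t) (x : X) :
    T s (T t x) = T t (T s x) := by
  rw [← hT.apply_add hs ht, ← hT.apply_add ht hs, add_comm]

theorem pow_eq (hT : IsC0Semigroup T) {t : ℝ} (ht : 0 ≤ t) (n : ℕ) : T t ^ n = T (n * t) := by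
  induction n with
  | zero => simp [hT.1]
  | succ n ih =>
    ext x
    rw [pow_succ', mul_apply_eq_comp, ih, ← hT.apply_add ht (by positivity)]
    push_cast
    ring_nf

theorem norm_smul_pow_le (hT : IsC0Semigroup T) (hTM : ∀ t, 0 ≤ t → ‖T t‖ ≤ M) {c : ℂ}
    (hc : ‖c‖ = 1) {t : ℝ} (ht : 0 ≤ t) (n : ℕ) : ‖(c • T t) ^ n‖ ≤ M := by
  rw [smul_pow, hT.pow_eq ht, norm_smul, norm_pow, hc, one_pow, one_mul]
  exact hTM _ (by positivity)

theorem continuousWithinAt_orbit_zero (hT : IsC0Semigroup T) (x : X) :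
    ContinuousWithinAt (fun t => T t x) (Ici 0) 0 := by
  rw [← continuousWithinAt_Ioi_iff_Ici, ContinuousWithinAt, hT.1]
  exact hT.2.2 x

theorem norm_apply_sub_apply_le (hT : IsC0Semigroup T) (hTM : ∀ t, 0 ≤ t → ‖T t‖ ≤ M)
    {s t : ℝ} (hs : 0 ≤ s) (ht : 0 ≤ t) (x : X) :
    ‖T s x - T t x‖ ≤ M * ‖T |s - t| x - x‖ := by
  wlog hts : t ≤ s generalizing s t
  · rw [norm_sub_rev, abs_sub_comm]
    exact this ht hs (le_of_not_ge hts)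
  have hst : 0 ≤ s - t := sub_nonneg.2 hts
  calc ‖T s x - T t x‖ = ‖T t (T |s - t| x - x)‖ := by
        rw [abs_of_nonneg hst, map_sub, ← hT.apply_add ht hst, add_sub_cancel]
    _ ≤ M * ‖T |s - t| x - x‖ := (T t).le_of_opNorm_le (hTM t ht) _

theorem continuousOn_orbit (hT : IsC0Semigroup T) (hTM : ∀ t, 0 ≤ t → ‖T t‖ ≤ M) (x : X) :
    ContinuousOn (fun t => T t x) (Ici 0) := by
  intro t ht
  have hdist : ContinuousWithinAt (fun s => T |s - t| x) (Ici 0) t :=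
    (hT.continuousWithinAt_orbit_zero x).comp_of_eq
      (continuous_id.sub continuous_const).abs.continuousWithinAt
      (fun s _ => abs_nonneg (s - t)) (by simp)
  rw [ContinuousWithinAt, tendsto_iff_norm_sub_tendsto_zero]
  refine squeeze_zero' (Eventually.of_forall fun _ => norm_nonneg _)
    (eventually_nhdsWithin_of_forall fun s hs => hT.norm_apply_sub_apply_le hTM hs ht x) ?_
  simpa [hT.1] using ((hdist.sub (continuousWithinAt_const (b := x))).norm.const_mul M).tendsto

end IsC0Semigroup

theorem IsGenerator.hasDerivWithinAt_orbit {T : ℝ → X →L[ℂ] X} (hT : IsC0Semigroup T)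
    {dom : Set X} {A : X → X} (hA : IsGenerator T dom A) {x : X} (hx : x ∈ dom) {t : ℝ}
    (ht : 0 ≤ t) : HasDerivWithinAt (fun s => T s x) (T t (A x)) (Ici t) t := by
  rw [hasDerivWithinAt_Ici_iff_tendsto_inv_smul]
  refine (((T t).continuous.tendsto _).comp (hA.2 x hx)).congr' ?_
  filter_upwards [self_mem_nhdsWithin] with h (hh : 0 < h)
  simp [hT.apply_add ht hh.le, map_sub, map_smul]

noncomputable def truncLaplace (T : ℝ → X →L[ℂ] X) (lam : ℂ) (t : ℝ) (x : X) : X :=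
  ∫ s in (0 : ℝ)..t, Complex.exp (-(lam * s)) • T s x

theorem truncLaplace_smul (T : ℝ → X →L[ℂ] X) (lam : ℂ) (t : ℝ) (c : ℂ) (x : X) :
    truncLaplace T lam t (c • x) = c • truncLaplace T lam t x := by
  simp only [truncLaplace, map_smul, smul_comm _ c]
  exact intervalIntegral.integral_smul c _

theorem norm_truncLaplace_le {T : ℝ → X →L[ℂ] X} {M : ℝ} (hTM : ∀ t, 0 ≤ t → ‖T t‖ ≤ M)
    {lam : ℂ} (hlam : 0 ≤ lam.re) {t : ℝ} (ht : 0 ≤ t) (x : X) :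
    ‖truncLaplace T lam t x‖ ≤ M * t * ‖x‖ := by
  have hbound : ∀ s ∈ uIoc (0 : ℝ) t, ‖Complex.exp (-(lam * s)) • T s x‖ ≤ M * ‖x‖ := by
    intro s hs
    rw [uIoc_of_le ht] at hs
    have hexp : ‖Complex.exp (-(lam * s))‖ ≤ 1 := by
      rw [Complex.norm_exp, Real.exp_le_one_iff]
      simpa using mul_nonneg hlam hs.1.le
    calc ‖Complex.exp (-(lam * s)) • T s x‖ ≤ 1 * (M * ‖x‖) := by
          rw [norm_smul]
          exact mul_le_mul hexp ((T s).le_of_opNorm_le (hTM s hs.1.le) x) (norm_nonneg _)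
            zero_le_one
      _ = M * ‖x‖ := one_mul _
  calc ‖truncLaplace T lam t x‖ ≤ M * ‖x‖ * |t - 0| :=
        intervalIntegral.norm_integral_le_of_norm_le_const hbound
    _ = M * t * ‖x‖ := by rw [sub_zero, abs_of_nonneg ht]; ring

namespace IsC0Semigroup

variable {T : ℝ → X →L[ℂ] X} {M : ℝ}

theorem continuousOn_exp_smul_orbit (hT : IsC0Semigroup T) (hTM : ∀ t, 0 ≤ t → ‖T t‖ ≤ M)
    (lam : ℂ) (x : X) :
    ContinuousOn (fun s : ℝ => Complex.exp (-(lam * s)) • T s x) (Ici 0) :=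
  (by fun_prop : Continuous fun s : ℝ => Complex.exp (-(lam * s))).continuousOn.smul
    (hT.continuousOn_orbit hTM x)

theorem intervalIntegrable_exp_smul_orbit (hT : IsC0Semigroup T)
    (hTM : ∀ t, 0 ≤ t → ‖T t‖ ≤ M) (lam : ℂ) (x : X) {a b : ℝ} (ha : 0 ≤ a) (hb : 0 ≤ b) :
    IntervalIntegrable (fun s : ℝ => Complex.exp (-(lam * s)) • T s x) volume a b :=
  ((hT.continuousOn_exp_smul_orbit hTM lam x).mono fun _ hs =>
    (le_min ha hb).trans hs.1).intervalIntegrable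

theorem truncLaplace_add (hT : IsC0Semigroup T) (hTM : ∀ t, 0 ≤ t → ‖T t‖ ≤ M) (lam : ℂ)
    {t : ℝ} (ht : 0 ≤ t) (x y : X) :
    truncLaplace T lam t (x + y) = truncLaplace T lam t x + truncLaplace T lam t y := by
  simp only [truncLaplace, map_add, smul_add]
  exact intervalIntegral.integral_add (hT.intervalIntegrable_exp_smul_orbit hTM lam x le_rfl ht)
    (hT.intervalIntegrable_exp_smul_orbit hTM lam y le_rfl ht)

noncomputable def truncLaplaceCLM (hT : IsC0Semigroup T) (hTM : ∀ t, 0 ≤ t → ‖T t‖ ≤ M)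
    {lam : ℂ} (hlam : 0 ≤ lam.re) {t : ℝ} (ht : 0 ≤ t) : X →L[ℂ] X :=
  LinearMap.mkContinuous
    { toFun := truncLaplace T lam t
      map_add' := hT.truncLaplace_add hTM lam ht
      map_smul' := truncLaplace_smul T lam t }
    (M * t) (norm_truncLaplace_le hTM hlam ht)

@[simp]
theorem truncLaplaceCLM_apply (hT : IsC0Semigroup T) (hTM : ∀ t, 0 ≤ t → ‖T t‖ ≤ M)
    {lam : ℂ} (hlam : 0 ≤ lam.re) {t : ℝ} (ht : 0 ≤ t) (x : X) :
    hT.truncLaplaceCLM hTM hlam ht x = truncLaplace T lam t x :=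
  rfl

theorem norm_truncLaplaceCLM_le (hT : IsC0Semigroup T) (hTM : ∀ t, 0 ≤ t → ‖T t‖ ≤ M)
    {lam : ℂ} (hlam : 0 ≤ lam.re) {t : ℝ} (ht : 0 ≤ t) :
    ‖hT.truncLaplaceCLM hTM hlam ht‖ ≤ M * t :=
  LinearMap.mkContinuous_norm_le _ (mul_nonneg ((norm_nonneg _).trans (hTM 0 le_rfl)) ht) _

variable [CompleteSpace X]

theorem hasDerivWithinAt_truncLaplace (hT : IsC0Semigroup T) (hTM : ∀ t, 0 ≤ t → ‖T t‖ ≤ M)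
    (lam : ℂ) (x : X) {t : ℝ} (ht : 0 ≤ t) :
    HasDerivWithinAt (fun u => truncLaplace T lam u x) (Complex.exp (-(lam * t)) • T t x)
      (Ici t) t := by
  have hIoi : Ioi t ⊆ Ici 0 := fun s hs => ht.trans (le_of_lt hs)
  have hcont := hT.continuousOn_exp_smul_orbit hTM lam x
  exact intervalIntegral.integral_hasDerivWithinAt_right
    (hT.intervalIntegrable_exp_smul_orbit hTM lam x le_rfl ht) (t := Ioi t)
    ((hcont.stronglyMeasurableAtFilter_nhdsWithin measurableSet_Ici t).filter_mono
      (nhdsWithin_mono t hIoi))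
    ((hcont t ht).mono hIoi)

theorem apply_truncLaplace (hT : IsC0Semigroup T) (hTM : ∀ t, 0 ≤ t → ‖T t‖ ≤ M) (lam : ℂ)
    {h t : ℝ} (hh : 0 ≤ h) (ht : 0 ≤ t) (x : X) :
    T h (truncLaplace T lam t x) = truncLaplace T lam t (T h x) := by
  rw [truncLaplace, ← (T h).intervalIntegral_comp_comm
    (hT.intervalIntegrable_exp_smul_orbit hTM lam x le_rfl ht)]
  refine intervalIntegral.integral_congr fun s hs => ?_
  rw [uIcc_of_le ht] at hs
  simp only [map_smul, hT.apply_comm hh hs.1]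

theorem apply_truncLaplace_eq_exp_smul_sub (hT : IsC0Semigroup T)
    (hTM : ∀ t, 0 ≤ t → ‖T t‖ ≤ M) (lam : ℂ) {h t : ℝ} (hh : 0 ≤ h) (ht : 0 ≤ t) (x : X) :
    T h (truncLaplace T lam t x) =
      Complex.exp (lam * h) • (truncLaplace T lam (t + h) x - truncLaplace T lam h x) := by
  calc T h (truncLaplace T lam t x) = ∫ s in (0 : ℝ)..t,
        Complex.exp (lam * h) • (Complex.exp (-(lam * ↑(s + h))) • T (s + h) x) := by
        rw [hT.apply_truncLaplace hTM lam hh ht, truncLaplace]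
        refine intervalIntegral.integral_congr fun s hs => ?_
        rw [uIcc_of_le ht] at hs
        rw [smul_smul, ← Complex.exp_add, hT.apply_add hs.1 hh]
        push_cast
        ring_nf
    _ = Complex.exp (lam * h) • ∫ u in h..t + h, Complex.exp (-(lam * u)) • T u x := by
        rw [intervalIntegral.integral_smul,
          intervalIntegral.integral_comp_add_right
            (fun u : ℝ => Complex.exp (-(lam * u)) • T u x), zero_add]
    _ = Complex.exp (lam * h) • (truncLaplace T lam (t + h) x - truncLaplace T lam h x) := by
        rw [← intervalIntegral.integral_interval_sub_left
          (hT.intervalIntegrable_exp_smul_orbit hTM lam x le_rfl (by positivity))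
          (hT.intervalIntegrable_exp_smul_orbit hTM lam x le_rfl hh)]
        rfl

theorem tendsto_truncLaplace (hT : IsC0Semigroup T)
    (hTM : ∀ t, 0 ≤ t → ‖T t‖ ≤ M) (lam : ℂ) {t : ℝ} (ht : 0 ≤ t) (x : X) :
    Tendsto (fun h : ℝ => (h : ℂ)⁻¹ • (T h (truncLaplace T lam t x) - truncLaplace T lam t x))
      (𝓝[>] 0) (𝓝 (lam • truncLaplace T lam t x - x + Complex.exp (-(lam * t)) • T t x)) := by
  set F : ℝ → X := fun u => truncLaplace T lam u x
  have hF0 : F 0 = 0 := intervalIntegral.integral_same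
  have hderiv₀ : HasDerivWithinAt F x (Ici 0) 0 := by
    simpa [hT.1] using hT.hasDerivWithinAt_truncLaplace hTM lam x le_rfl
  have hderivₜ : HasDerivWithinAt (fun h => F (t + h)) (Complex.exp (-(lam * t)) • T t x)
      (Ici 0) 0 := by
    simpa [Function.comp_def] using (hT.hasDerivWithinAt_truncLaplace hTM lam x ht).scomp_of_eq 0
      ((hasDerivAt_id (0 : ℝ)).const_add t).hasDerivWithinAt
      (fun h (hh : h ∈ Ici (0 : ℝ)) => show t ≤ t + h from le_add_of_nonneg_right hh) (by simp)
  -- By `apply_truncLaplace_eq_exp_smul_sub`, the quotient is a difference quotient of this product.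
  have hG := (hasDerivAt_exp_mul_ofReal lam 0).hasDerivWithinAt.smul (hderivₜ.sub hderiv₀)
  rw [hasDerivWithinAt_Ici_iff_tendsto_inv_smul] at hG
  convert hG.congr' ?_ using 2
  · simp only [Complex.ofReal_zero, mul_zero, Complex.exp_zero, one_smul, mul_one, Pi.sub_apply,
      add_zero, hF0, sub_zero]
    abel
  · filter_upwards [self_mem_nhdsWithin] with h (hh : 0 < h)
    simp only [Pi.smul_apply', Pi.sub_apply, zero_add, add_zero, hF0, sub_zero,
      Complex.ofReal_zero, mul_zero, Complex.exp_zero, one_smul]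
    rw [← hT.apply_truncLaplace_eq_exp_smul_sub hTM lam hh.le ht]

end IsC0Semigroup

namespace IsGenerator

variable [CompleteSpace X] {T : ℝ → X →L[ℂ] X} {M : ℝ} {dom : Set X} {A : X → X}

theorem truncLaplace_smul_sub (hT : IsC0Semigroup T)
    (hTM : ∀ t, 0 ≤ t → ‖T t‖ ≤ M) (hA : IsGenerator T dom A)
    {x : X} (hx : x ∈ dom) (lam : ℂ) {t : ℝ} (ht : 0 ≤ t) :
    truncLaplace T lam t (lam • x - A x) = x - Complex.exp (-(lam * t)) • T t x := by
  have hderiv : ∀ s ∈ Ioo 0 t,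
      HasDerivWithinAt (fun u : ℝ => -(Complex.exp (-(lam * u)) • T u x))
        (Complex.exp (-(lam * s)) • T s (lam • x - A x)) (Ioi s) s := by
    intro s hs
    refine (((hasDerivAt_exp_neg_mul_ofReal lam s).hasDerivWithinAt.smul
      (hA.hasDerivWithinAt_orbit hT hx hs.1.le)).mono Ioi_subset_Ici_self).neg.congr_deriv ?_
    rw [map_sub, map_smul]
    module
  have hcont : ContinuousOn (fun u : ℝ => -(Complex.exp (-(lam * u)) • T u x)) (Icc 0 t) :=
    ((hT.continuousOn_exp_smul_orbit hTM lam x).mono Icc_subset_Ici_self).neg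
  rw [truncLaplace, intervalIntegral.integral_eq_sub_of_hasDeriv_right_of_le ht hcont hderiv
    (hT.intervalIntegrable_exp_smul_orbit hTM lam _ le_rfl ht)]
  simp [hT.1, neg_add_eq_sub]

theorem truncLaplace_mem (hT : IsC0Semigroup T)
    (hTM : ∀ t, 0 ≤ t → ‖T t‖ ≤ M) (hA : IsGenerator T dom A)
    (lam : ℂ) {t : ℝ} (ht : 0 ≤ t) (z : X) : truncLaplace T lam t z ∈ dom :=
  (hA.1 _).2 ⟨_, hT.tendsto_truncLaplace hTM lam ht z⟩

theorem smul_sub_apply_truncLaplace (hT : IsC0Semigroup T)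
    (hTM : ∀ t, 0 ≤ t → ‖T t‖ ≤ M) (hA : IsGenerator T dom A)
    (lam : ℂ) {t : ℝ} (ht : 0 ≤ t) (z : X) :
    lam • truncLaplace T lam t z - A (truncLaplace T lam t z) =
      z - Complex.exp (-(lam * t)) • T t z := by
  rw [tendsto_nhds_unique (hA.2 _ (hA.truncLaplace_mem hT hTM lam ht z))
    (hT.tendsto_truncLaplace hTM lam ht z)]
  abel

end IsGenerator

end

theorem stmt17_general {X : Type u} [NormedAddCommGroup X] [NormedSpace ℂ X] [CompleteSpace X]
    (T : ℝ → X →L[ℂ] X) (hT : IsC0Semigroup T)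
    (M : ℝ) (hTM : ∀ t : ℝ, 0 ≤ t → ‖T t‖ ≤ M)
    (dom : Set X) (A : X → X) (hA : IsGenerator T dom A)
    (ζ : ℂ) (hζ : ‖ζ‖ = 1) (K : ℝ) (hK : 1 / 2 ≤ K)
    (hlow : ∀ t : ℝ, 0 < t → ∀ x : X, ‖x‖ / K ≤ ‖ζ • x - T t x‖)
    (θ₁ θ₂ : ℝ) (hθ₁ : 0 < θ₁) (hθ₂ : 0 < θ₂)
    (hζ₁ : Complex.exp ((θ₁ : ℂ) * Complex.I) = ζ)
    (hζ₂ : Complex.exp (-(θ₂ : ℂ) * Complex.I) = ζ) :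
    ∀ α : ℝ, α ≠ 0 → ∃ R : X →L[ℂ] X,
      IsResolventAt dom A ((α : ℂ) * Complex.I) R ∧
      ‖R‖ ≤ M * K * max θ₁ θ₂ / |α| := by
  intro α hα
  obtain ⟨t, ht, ht_le, hexp⟩ := exists_pos_exp_neg_mul_I_eq_inv hθ₁ hθ₂ hζ₁ hζ₂ hα
  have hK₀ : 0 < K := by linarith
  have hM₀ : 0 ≤ M := (norm_nonneg _).trans (hTM 0 le_rfl)
  have hVK := antilipschitzWith_one_sub_inv_smul hζ hK₀ (hlow t ht)
  have hV : ∀ z, (1 - ζ⁻¹ • T t) z = z - Complex.exp (-((α : ℂ) * Complex.I * t)) • T t z := by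
    simp [hexp]
  let g := hT.truncLaplaceCLM hTM (lam := α * Complex.I) (by simp) ht.le
  obtain ⟨R, hR, hR_le⟩ := exists_isResolventAt_of_intertwining g _ hVK
    (ContinuousLinearMap.surjective_one_sub_of_norm_pow_le
      (hT.norm_smul_pow_le hTM (by rw [norm_inv, hζ, inv_one]) ht.le) hVK)
    (fun z => by simp only [hV, g, IsC0Semigroup.truncLaplaceCLM_apply, map_sub, map_smul,
      hT.apply_truncLaplace hTM _ ht.le ht.le])
    (hA.truncLaplace_mem hT hTM _ ht.le)
    (fun z => by rw [hV]; exact hA.smul_sub_apply_truncLaplace hT hTM _ ht.le z)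
    (fun x hx => by rw [hV]; exact hA.truncLaplace_smul_sub hT hTM hx _ ht.le)
  refine ⟨R, hR, hR_le.trans ?_⟩
  rw [Real.coe_toNNReal _ hK₀.le]
  calc ‖g‖ * K ≤ M * t * K := by gcongr; exact hT.norm_truncLaplaceCLM_le hTM _ ht.le
    _ = M * K * t := by ring
    _ ≤ M * K * max θ₁ θ₂ / |α| := by rw [mul_div_assoc]; gcongr

/-- Quantitative step in Kato's theorem: if `(T t)` is a `C₀`-semigroup with
`‖T t‖ ≤ M`, and `‖(ζ I - T t) x‖ ≥ ‖x‖/K` for a unimodular `ζ = e^{iθ₁} = e^{-iθ₂}`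
(`θ₁, θ₂ > 0`) and all `t > 0`, then every nonzero point `iα` of the imaginary axis
is in the resolvent set of the generator `A` and
`‖R(iα, A)‖ ≤ M K max(θ₁, θ₂) / |α|`. -/
theorem stmt17 {X : Type u} [NormedAddCommGroup X] [NormedSpace ℂ X] [CompleteSpace X]
    (T : ℝ → X →L[ℂ] X) (hT : IsC0Semigroup T)
    (M : ℝ) (hM : 1 ≤ M) (hTM : ∀ t : ℝ, 0 ≤ t → ‖T t‖ ≤ M)
    (dom : Set X) (A : X → X) (hA : IsGenerator T dom A)
    (ζ : ℂ) (hζ : ‖ζ‖ = 1) (K : ℝ) (hK : 1 / 2 ≤ K)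
    (hlow : ∀ t : ℝ, 0 < t → ∀ x : X, ‖x‖ / K ≤ ‖ζ • x - T t x‖)
    (θ₁ θ₂ : ℝ) (hθ₁ : 0 < θ₁) (hθ₂ : 0 < θ₂)
    (hζ₁ : Complex.exp ((θ₁ : ℂ) * Complex.I) = ζ)
    (hζ₂ : Complex.exp (-(θ₂ : ℂ) * Complex.I) = ζ) :
    ∀ α : ℝ, α ≠ 0 → ∃ R : X →L[ℂ] X,
      IsResolventAt dom A ((α : ℂ) * Complex.I) R ∧
      ‖R‖ ≤ M * K * max θ₁ θ₂ / |α| :=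
  stmt17_general T hT M hTM dom A hA ζ hζ K hK hlow θ₁ θ₂ hθ₁ hθ₂ hζ₁ hζ₂
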